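/- arXiv:1503.01731 — 7 statements merged into one kernel-verified Lean document; each statement's English description precedes it below -/
import Mathlib

section
/- Let (b_k)_{k≥1} be a sequence of real numbers satisfying b₁ = 1, b_{2N} ≥ b_N and b_{2N+1} = 2b_N + 1 for all N ≥ 1. Then b_k ≥ 2^{σ₁(k)} − 1 for all k ≥ 1. -/
/-- number of ones in the binary expansion -/
def sigma1 (k : ℕ) : ℕ := (Nat.digits 2 k).count 1

lemma sigma1_even (N : ℕ) (hN : 1 ≤ N) : sigma1 (2 * N) = sigma1 N := by
  unfold sigma1
  rw [Nat.digits_def' (by norm_num) (by omega)]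
  have h1 : 2 * N % 2 = 0 := by omega
  have h2 : 2 * N / 2 = N := by omega
  rw [h1, h2, List.count_cons]
  simp

lemma sigma1_odd (N : ℕ) : sigma1 (2 * N + 1) = sigma1 N + 1 := by
  unfold sigma1
  rw [Nat.digits_def' (by norm_num) (by omega)]
  have h1 : (2 * N + 1) % 2 = 1 := by omega
  have h2 : (2 * N + 1) / 2 = N := by omega
  rw [h1, h2, List.count_cons]
  simp

theorem b_ge_two_pow_sigma1_sub_one (b : ℕ → ℝ) (h1 : b 1 = 1)
    (heven : ∀ N : ℕ, 1 ≤ N → b N ≤ b (2 * N))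
    (hodd : ∀ N : ℕ, 1 ≤ N → b (2 * N + 1) = 2 * b N + 1) :
    ∀ k : ℕ, 1 ≤ k → (2 : ℝ) ^ sigma1 k - 1 ≤ b k := by
  intro k
  induction k using Nat.strong_induction_on with
  | _ k ih =>
    intro hk
    match k, hk with
    | 1, _ =>
      have : sigma1 1 = 1 := by simp [sigma1]
      rw [this, h1]; norm_num
    | (n+2), _ =>
      rcases Nat.even_or_odd (n+2) with ⟨N, hNe⟩ | ⟨N, hNo⟩
      · have hN : 1 ≤ N := by omega
        have hk2 : n + 2 = 2 * N := by omega
        have hlt : N < n + 2 := by omega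
        have := ih N hlt hN
        rw [hk2, sigma1_even N hN]
        exact le_trans this (heven N hN)
      · have hN : 1 ≤ N := by omega
        have hk2 : n + 2 = 2 * N + 1 := by omega
        have hlt : N < n + 2 := by omega
        have hI := ih N hlt hN
        rw [hk2, sigma1_odd N, hodd N hN, pow_succ]
        linarith
end

section
/- For the bit-reversal sequence e_k = exp(iπ Σ_j a_j 2^{−j}) (where k = Σ_j a_j 2^j in binary), the first 2^n terms {e_0, …, e_{2^n − 1}} equal, as sets, the set of all 2^n-th roots of unity. -/
/-!
Write `e k = exp (π i θ k)` with `θ k = Σ_j a_j 2^{-j}`. Adding a lowest binary digit `b` to `k`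
gives `θ (2k + b) = b + θ k / 2`, so `e (2k + b) ^ 2 = e k` and `e (2k + 1) = - e (2k)`: the two
square roots of `e k` are `e (2k)` and `e (2k + 1)`. Since the 2^(n+1)-th roots of unity are
exactly the square roots of the 2^n-th ones, induction on `n` gives the claim.
-/

/-- The bit-reversal (Van der Corput) Leja sequence on the unit circle:
`e k = exp(iπ Σ_j a_j 2^{-j})` where `k = Σ_j a_j 2^j` in binary. -/
noncomputable def e (k : ℕ) : ℂ :=
  Complex.exp (Real.pi * Complex.I *
    ∑ j ∈ Finset.range (k + 1), if k.testBit j then ((1 : ℂ) / 2) ^ j else 0)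

open Finset Complex

section TestBitSums

variable {M : Type*} [AddCommMonoid M]

lemma sum_range_testBit_eq_of_le {f : ℕ → M} {k N N' : ℕ} (hk : k < 2 ^ N) (hN : N ≤ N') :
    ∑ j ∈ range N', (if k.testBit j then f j else 0) =
      ∑ j ∈ range N, (if k.testBit j then f j else 0) := by
  refine (sum_subset (range_subset_range.mpr hN) fun j _ hj => ?_).symm
  have hj : N ≤ j := by simpa using hj
  rw [Nat.testBit_eq_false_of_lt (hk.trans_le (Nat.pow_le_pow_right two_pos hj))]
  rfl

lemma sum_range_testBit_eq {f : ℕ → M} {k N N' : ℕ} (hN : k < 2 ^ N) (hN' : k < 2 ^ N') :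
    ∑ j ∈ range N, (if k.testBit j then f j else 0) =
      ∑ j ∈ range N', (if k.testBit j then f j else 0) := by
  rcases le_total N N' with h | h
  · exact (sum_range_testBit_eq_of_le hN h).symm
  · exact sum_range_testBit_eq_of_le hN' h

lemma sum_range_succ_testBit_bit (f : ℕ → M) (b : Bool) (k N : ℕ) :
    ∑ j ∈ range (N + 1), (if (Nat.bit b k).testBit j then f j else 0) =
      (if b then f 0 else 0) + ∑ j ∈ range N, (if k.testBit j then f (j + 1) else 0) := by
  rw [sum_range_succ', add_comm, Nat.testBit_bit_zero]
  simp only [Nat.testBit_bit_succ]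

end TestBitSums

noncomputable def bitReversalSum (k : ℕ) : ℂ :=
  ∑ j ∈ range (k + 1), if k.testBit j then ((1 : ℂ) / 2) ^ j else 0

lemma e_eq_exp_bitReversalSum (k : ℕ) : e k = exp (Real.pi * I * bitReversalSum k) := rfl

lemma bitReversalSum_eq_sum {k N : ℕ} (hk : k < 2 ^ N) :
    bitReversalSum k = ∑ j ∈ range N, if k.testBit j then ((1 : ℂ) / 2) ^ j else 0 :=
  sum_range_testBit_eq (k.lt_succ_self.trans Nat.lt_two_pow_self) hk

lemma bitReversalSum_bit (b : Bool) (k : ℕ) :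
    bitReversalSum (Nat.bit b k) = b.toNat + bitReversalSum k / 2 := by
  have hk : k < 2 ^ (k + 1) := k.lt_succ_self.trans Nat.lt_two_pow_self
  rw [bitReversalSum_eq_sum (Nat.bit_lt_two_pow_succ_iff.mpr hk), sum_range_succ_testBit_bit,
    bitReversalSum, sum_div]
  congr 1
  · cases b <;> simp
  · refine sum_congr rfl fun j _ => ?_
    split_ifs <;> ring

lemma e_bit_sq (b : Bool) (k : ℕ) : e (Nat.bit b k) ^ 2 = e k := by
  rw [e_eq_exp_bitReversalSum, e_eq_exp_bitReversalSum, ← exp_nat_mul, bitReversalSum_bit,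
    show ((2 : ℕ) : ℂ) * (Real.pi * I * (b.toNat + bitReversalSum k / 2)) =
      b.toNat * (2 * Real.pi * I) + Real.pi * I * bitReversalSum k by ring,
    exp_add, exp_nat_mul_two_pi_mul_I, one_mul]

lemma e_bit_true (k : ℕ) : e (Nat.bit true k) = - e (Nat.bit false k) := by
  simp only [e_eq_exp_bitReversalSum, bitReversalSum_bit, Bool.toNat_true, Bool.toNat_false,
    Nat.cast_one, Nat.cast_zero, zero_add, mul_add, mul_one, exp_add, exp_pi_mul_I]
  ring

lemma exists_e_bit_eq_of_sq_eq {z : ℂ} {k : ℕ} (hz : z ^ 2 = e k) :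
    ∃ b, e (Nat.bit b k) = z := by
  rw [← e_bit_sq false] at hz
  rcases sq_eq_sq_iff_eq_or_eq_neg.mp hz with h | h
  · exact ⟨false, h.symm⟩
  · exact ⟨true, by rw [e_bit_true, h]⟩

theorem e_image_eq_rootsOfUnity (n : ℕ) :
    e '' {k : ℕ | k < 2 ^ n} = {z : ℂ | z ^ (2 ^ n) = 1} := by
  induction n with
  | zero => simp [e]
  | succ n ih =>
    ext z
    have hpow : z ^ 2 ^ (n + 1) = (z ^ 2) ^ 2 ^ n := by rw [← pow_mul, pow_succ']
    simp only [Set.mem_ofPred_eq, hpow]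
    constructor
    · rintro ⟨m, hm, rfl⟩
      obtain ⟨b, k, rfl⟩ : ∃ b k, Nat.bit b k = m := ⟨_, _, m.bit_testBit_zero_shiftRight_one⟩
      rw [e_bit_sq]
      exact ih.subset <| Set.mem_image_of_mem e (Nat.bit_lt_two_pow_succ_iff.mp hm)
    · intro hz
      obtain ⟨k, hk, hek⟩ : z ^ 2 ∈ e '' {k : ℕ | k < 2 ^ n} := ih ▸ hz
      obtain ⟨b, rfl⟩ := exists_e_bit_eq_of_sq_eq hek.symm
      exact ⟨Nat.bit b k, Nat.bit_lt_two_pow_succ_iff.mpr hk, rfl⟩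
end

section
/- Let e_0, …, e_{2^n − 1} be the 2^n-th roots of unity. Then for every z on the unit circle, Σ_{j=0}^{2^n−1} |(z^{2^n} − 1)/(2^n (z − e_j))|² = 1. -/
/-!
For `x ^ N = 1` we have `(z ^ N - 1) / (z - x) = ∑_{i < N} z ^ (N - 1 - i) x ^ i`, so the
`j`-th summand is `‖p(e_j)‖² / N²` for the polynomial `p` with coefficients
`p_i = z ^ (N - 1 - i)`. The characters `x ↦ x ^ k`, `k < N`, are orthogonal on the `N`-th roots
of unity, which gives the discrete Parseval identity `∑_x ‖p(x)‖² = N ∑_i ‖p_i‖²`; on the unit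
circle every coefficient has norm one, so the total is `N · N / N² = 1`.
-/

open Finset Polynomial ComplexConjugate

section Domain

variable {R : Type*} [CommRing R] [IsDomain R]

theorem image_range_eq_nthRootsFinset [DecidableEq R] {N : ℕ} {a : R} {e : ℕ → R}
    (hinj : Set.InjOn e (range N)) (hroot : ∀ j < N, e j ^ N = a) :
    (range N).image e = nthRootsFinset N a := by
  rcases N.eq_zero_or_pos with rfl | hN
  · simp
  refine eq_of_subset_of_card_le (fun x hx => ?_) ?_
  · obtain ⟨j, hj, rfl⟩ := mem_image.1 hx
    exact (mem_nthRootsFinset hN a).2 (hroot j (mem_range.1 hj))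
  · rw [card_image_of_injOn hinj, card_range, nthRootsFinset_def]
    exact (Multiset.toFinset_card_le _).trans (card_nthRoots N a)

theorem IsPrimitiveRoot.sum_pow_nthRootsFinset_one {N : ℕ} {ζ : R} (hζ : IsPrimitiveRoot ζ N)
    (r : ℕ) : ∑ x ∈ nthRootsFinset N (1 : R), x ^ r = if N ∣ r then (N : R) else 0 := by
  classical
  have hinj : Set.InjOn (ζ ^ ·) (range N) := fun i hi j hj =>
    hζ.pow_inj (mem_range.1 hi) (mem_range.1 hj)
  have himg : (range N).image (ζ ^ ·) = nthRootsFinset N (1 : R) :=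
    image_range_eq_nthRootsFinset hinj fun j _ => by rw [pow_right_comm, hζ.pow_eq_one, one_pow]
  rw [← himg, sum_image hinj]
  simp_rw [← pow_mul, mul_comm _ r, pow_mul]
  split_ifs with hr
  · simp [(hζ.pow_eq_one_iff_dvd r).2 hr]
  · have hgeom := geom_sum_mul (ζ ^ r) N
    rw [pow_right_comm, hζ.pow_eq_one, one_pow, sub_self] at hgeom
    exact (mul_eq_zero.1 hgeom).resolve_right
      (sub_ne_zero.2 fun h => hr ((hζ.pow_eq_one_iff_dvd r).1 h))

end Domain

theorem Nat.dvd_add_sub_iff_eq {N k m : ℕ} (hk : k < N) (hm : m < N) :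
    N ∣ k + (N - m) ↔ k = m := by
  refine ⟨fun h => ?_, fun h => ⟨1, by omega⟩⟩
  have := Nat.eq_of_dvd_of_lt_two_mul (by omega) h (by omega)
  omega

theorem sum_pow_mul_conj_pow_nthRootsFinset {N k m : ℕ} (hk : k < N) (hm : m < N) :
    ∑ x ∈ nthRootsFinset N (1 : ℂ), x ^ k * conj x ^ m = if k = m then (N : ℂ) else 0 := by
  have hN : 0 < N := by omega
  have hconj : ∀ x ∈ nthRootsFinset N (1 : ℂ), x ^ k * conj x ^ m = x ^ (k + (N - m)) := by
    intro x hx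
    have hxN : x ^ N = 1 := (mem_nthRootsFinset hN 1).1 hx
    have hx0 : x ≠ 0 := ne_zero_of_mem_nthRootsFinset one_ne_zero hx
    rw [← Complex.inv_eq_conj (Complex.norm_eq_one_of_pow_eq_one hxN hN.ne'), pow_add,
      pow_sub₀ x hx0 hm.le, hxN, one_mul, inv_pow]
  rw [sum_congr rfl hconj, (Complex.isPrimitiveRoot_exp N hN.ne').sum_pow_nthRootsFinset_one]
  exact if_congr (Nat.dvd_add_sub_iff_eq hk hm) rfl rfl

theorem sum_norm_sq_sum_mul_pow_nthRootsFinset (N : ℕ) (a : ℕ → ℂ) :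
    ∑ x ∈ nthRootsFinset N (1 : ℂ), ‖∑ k ∈ range N, a k * x ^ k‖ ^ 2 =
      N * ∑ k ∈ range N, ‖a k‖ ^ 2 := by
  apply Complex.ofReal_injective
  push_cast
  simp_rw [← Complex.mul_conj', map_sum, map_mul, map_pow, sum_mul_sum, mul_sum]
  calc ∑ x ∈ nthRootsFinset N (1 : ℂ), ∑ k ∈ range N, ∑ m ∈ range N,
        a k * x ^ k * (conj (a m) * conj x ^ m)
      = ∑ k ∈ range N, ∑ m ∈ range N,
          a k * conj (a m) * ∑ x ∈ nthRootsFinset N (1 : ℂ), x ^ k * conj x ^ m := by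
        rw [sum_comm]
        refine sum_congr rfl fun k _ => ?_
        rw [sum_comm]
        simp_rw [mul_sum]
        exact sum_congr rfl fun m _ => sum_congr rfl fun x _ => by ring
    _ = ∑ k ∈ range N, (N : ℂ) * (a k * conj (a k)) := by
        refine sum_congr rfl fun k hk => ?_
        rw [sum_congr rfl fun m hm => by
          rw [sum_pow_mul_conj_pow_nthRootsFinset (mem_range.1 hk) (mem_range.1 hm)]]
        simp [hk, mul_comm]

theorem sum_pow_mul_pow_eq_div_of_pow_eq_one {K : Type*} [Field K] {N : ℕ} {x z : K}
    (hx : x ^ N = 1) (hzx : z ≠ x) :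
    ∑ i ∈ range N, z ^ (N - 1 - i) * x ^ i = (z ^ N - 1) / (z - x) := by
  rw [eq_div_iff (sub_ne_zero.2 hzx)]
  have hgeom := geom_sum₂_mul x z N
  simp_rw [mul_comm (x ^ _)] at hgeom
  linear_combination -hgeom - hx

theorem sum_sq_lagrange_roots_of_unity (n : ℕ) (e : ℕ → ℂ)
    (hinj : ∀ i j : ℕ, i < 2 ^ n → j < 2 ^ n → e i = e j → i = j)
    (hroot : ∀ j : ℕ, j < 2 ^ n → (e j) ^ (2 ^ n) = 1)
    (z : ℂ) (hz : ‖z‖ = 1) (hnz : z ^ (2 ^ n) ≠ 1) :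
    ∑ j ∈ Finset.range (2 ^ n),
      ‖(z ^ (2 ^ n) - 1) / ((2 ^ n : ℂ) * (z - e j))‖ ^ 2 = 1 := by
  set N := 2 ^ n
  have hN : (N : ℝ) ≠ 0 := by positivity
  have hinjOn : Set.InjOn e (range N) := fun i hi j hj =>
    hinj i j (mem_range.1 hi) (mem_range.1 hj)
  have hterm : ∀ x ∈ nthRootsFinset N (1 : ℂ),
      ‖(z ^ N - 1) / ((2 ^ n : ℂ) * (z - x))‖ ^ 2 =
        ‖∑ i ∈ range N, z ^ (N - 1 - i) * x ^ i‖ ^ 2 / N ^ 2 := by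
    intro x hx
    have hxN : x ^ N = 1 := (mem_nthRootsFinset (by positivity) 1).1 hx
    rw [sum_pow_mul_pow_eq_div_of_pow_eq_one hxN fun h => hnz (by rwa [h]), mul_comm,
      ← div_div, norm_div, div_pow]
    norm_cast
  calc ∑ j ∈ range N, ‖(z ^ N - 1) / ((2 ^ n : ℂ) * (z - e j))‖ ^ 2
      = ∑ x ∈ nthRootsFinset N (1 : ℂ),
          ‖(z ^ N - 1) / ((2 ^ n : ℂ) * (z - x))‖ ^ 2 := by
        rw [← image_range_eq_nthRootsFinset hinjOn hroot, sum_image hinjOn]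
    _ = (N * ∑ i ∈ range N, ‖z ^ (N - 1 - i)‖ ^ 2) / N ^ 2 := by
        rw [sum_congr rfl hterm, ← sum_div, sum_norm_sq_sum_mul_pow_nthRootsFinset]
    _ = 1 := by
        simp only [norm_pow, hz, one_pow, sum_const, card_range, nsmul_eq_mul]
        field_simp
end

section
/- For the bit-reversal Leja sequence E on the unit circle (e_k = exp(iπ Σ_j a_j 2^{−j}) with k = Σ_j a_j 2^j binary), and w_{E_k}(z) := Π_{j=0}^{k−1}(z − e_j), one has |w_{E_k}(e_k)| = 2^{σ₁(k)} = sup_{|z|=1} |w_{E_k}(z)| for all k ≥ 1, where σ₁(k) is the number of ones in the binary expansion of k. -/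
open Finset Complex

noncomputable def bitRevSum (m N : ℕ) : ℂ :=
  ∑ j ∈ range N, if m.testBit j then ((1 : ℂ) / 2) ^ j else 0

lemma bitRevSum_of_lt_two_pow {m M N : ℕ} (hm : m < 2 ^ M) (hMN : M ≤ N) :
    bitRevSum m N = bitRevSum m M := by
  refine (sum_subset (range_subset_range.2 hMN) fun j _ hj => ?_).symm
  have hmj : m < 2 ^ j :=
    hm.trans_le (Nat.pow_le_pow_right two_pos (not_lt.1 (mem_range.not.1 hj)))
  simp [Nat.testBit_lt_two_pow hmj]

lemma e_eq_exp_bitRevSum {m N : ℕ} (hm : m < 2 ^ N) :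
    e m = exp (Real.pi * I * bitRevSum m N) := by
  have hm' : m < 2 ^ (m + 1) := Nat.lt_two_pow_self.trans (Nat.pow_lt_pow_succ one_lt_two)
  rw [e, ← bitRevSum, ← bitRevSum_of_lt_two_pow hm' (le_max_left _ N),
    bitRevSum_of_lt_two_pow hm (le_max_right _ N)]

lemma bitRevSum_two_pow_add {n r : ℕ} (hr : r < 2 ^ n) :
    bitRevSum (2 ^ n + r) (n + 1) = bitRevSum r n + ((1 : ℂ) / 2) ^ n := by
  rw [bitRevSum, sum_range_succ, Nat.testBit_two_pow_add_eq, Nat.testBit_lt_two_pow hr]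
  congr 1
  exact sum_congr rfl fun j hj => by rw [Nat.testBit_two_pow_add_gt (mem_range.1 hj)]

lemma e_zero : e 0 = 1 := by
  simp [e]

lemma e_two_pow_add_eq_exp {n r : ℕ} (hr : r < 2 ^ n) :
    e (2 ^ n + r) = exp (Real.pi * I * ((1 : ℂ) / 2) ^ n) * e r := by
  have hk : 2 ^ n + r < 2 ^ (n + 1) := by rw [pow_succ]; omega
  rw [e_eq_exp_bitRevSum hk, e_eq_exp_bitRevSum hr, bitRevSum_two_pow_add hr, mul_add,
    exp_add, mul_comm]

lemma e_two_pow (n : ℕ) : e (2 ^ n) = exp (Real.pi * I * ((1 : ℂ) / 2) ^ n) := by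
  simpa [e_zero] using e_two_pow_add_eq_exp (Nat.two_pow_pos n)

lemma e_two_pow_add {n r : ℕ} (hr : r < 2 ^ n) : e (2 ^ n + r) = e (2 ^ n) * e r := by
  rw [e_two_pow_add_eq_exp hr, e_two_pow]

lemma norm_e_two_pow (n : ℕ) : ‖e (2 ^ n)‖ = 1 := by
  rw [e_two_pow, show (Real.pi * I * ((1 : ℂ) / 2) ^ n) = ((Real.pi * (1 / 2) ^ n : ℝ) : ℂ) * I by
    push_cast; ring]
  exact norm_exp_ofReal_mul_I _

lemma e_two_pow_ne_zero (n : ℕ) : e (2 ^ n) ≠ 0 := by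
  rw [e_two_pow]
  exact exp_ne_zero _

lemma e_two_pow_pow_two_pow (n : ℕ) : e (2 ^ n) ^ 2 ^ n = -1 := by
  rw [e_two_pow, ← exp_nat_mul, ← exp_pi_mul_I]
  congr 1
  push_cast
  rw [mul_comm, mul_assoc, ← mul_pow]
  norm_num

lemma e_pow_two_pow_of_lt {n r : ℕ} (hr : r < 2 ^ n) : e r ^ 2 ^ n = 1 := by
  induction n generalizing r with
  | zero => simp_all [e_zero]
  | succ n ih =>
    rw [pow_succ, pow_mul]
    rcases lt_or_ge r (2 ^ n) with hrn | hrn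
    · rw [ih hrn, one_pow]
    · obtain ⟨s, rfl⟩ := Nat.exists_eq_add_of_le hrn
      have hs : s < 2 ^ n := by rw [pow_succ] at hr; omega
      rw [e_two_pow_add hs, mul_pow, e_two_pow_pow_two_pow, ih hs]
      norm_num

noncomputable def w (k : ℕ) (z : ℂ) : ℂ :=
  ∏ j ∈ range k, (z - e j)

lemma w_two_pow_add {n r : ℕ} (hr : r ≤ 2 ^ n) (z : ℂ) :
    w (2 ^ n + r) z = w (2 ^ n) z * (e (2 ^ n) ^ r * w r (z / e (2 ^ n))) := by
  have hrot : ∀ i ∈ range r, z - e (2 ^ n + i) = e (2 ^ n) * (z / e (2 ^ n) - e i) := by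
    intro i hi
    rw [e_two_pow_add ((mem_range.1 hi).trans_le hr), mul_sub, mul_div_cancel₀ _
      (e_two_pow_ne_zero n)]
  rw [w, prod_range_add, prod_congr rfl hrot, prod_mul_distrib, prod_const, card_range]
  rfl

lemma w_two_pow (n : ℕ) (z : ℂ) : w (2 ^ n) z = z ^ 2 ^ n - 1 := by
  induction n generalizing z with
  | zero => simp [w, e_zero]
  | succ n ih =>
    rw [pow_succ, mul_two, w_two_pow_add le_rfl, ih, ih, e_two_pow_pow_two_pow, div_pow,
      e_two_pow_pow_two_pow, pow_add]
    ring

lemma norm_w_two_pow_add {n r : ℕ} (hr : r ≤ 2 ^ n) (z : ℂ) :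
    ‖w (2 ^ n + r) z‖ = ‖z ^ 2 ^ n - 1‖ * ‖w r (z / e (2 ^ n))‖ := by
  rw [w_two_pow_add hr, w_two_pow, norm_mul, norm_mul, norm_pow, norm_e_two_pow, one_pow,
    one_mul]

@[elab_as_elim]
lemma Nat.two_pow_add_induction {P : ℕ → Prop} (zero : P 0)
    (two_pow_add : ∀ n r, r < 2 ^ n → P r → P (2 ^ n + r)) (k : ℕ) : P k := by
  induction k using Nat.strong_induction_on with
  | _ k ih =>
    rcases Nat.eq_zero_or_pos k with rfl | hk
    · exact zero
    have hle : 2 ^ Nat.log 2 k ≤ k := Nat.pow_log_le_self 2 hk.ne'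
    have hlt : k < 2 ^ (Nat.log 2 k + 1) := Nat.lt_pow_succ_log_self one_lt_two k
    obtain ⟨r, hkr⟩ := Nat.exists_eq_add_of_le hle
    have hr : r < 2 ^ Nat.log 2 k := by rw [pow_succ] at hlt; omega
    rw [hkr]
    exact two_pow_add _ r hr (ih r (by omega))

lemma sigma1_two_pow_add {n r : ℕ} (hr : r < 2 ^ n) : sigma1 (2 ^ n + r) = sigma1 r + 1 := by
  have hlen : (Nat.digits 2 r).length ≤ n := (Nat.digits_length_le_iff one_lt_two r).2 hr
  have hdigits := Nat.digits_append_zeroes_append_digits (b := 2) (n := r)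
    (k := n - (Nat.digits 2 r).length) one_lt_two Nat.one_pos
  rw [Nat.add_sub_cancel' hlen, mul_one, add_comm] at hdigits
  rw [sigma1, sigma1, ← hdigits]
  simp [List.count_replicate]

lemma norm_w_e_self (k : ℕ) : ‖w k (e k)‖ = 2 ^ sigma1 k := by
  induction k using Nat.two_pow_add_induction with
  | zero => simp [w, sigma1]
  | two_pow_add n r hr ih =>
    have hquot : e (2 ^ n + r) / e (2 ^ n) = e r := by
      rw [e_two_pow_add hr, mul_div_cancel_left₀ _ (e_two_pow_ne_zero n)]
    have hpow : e (2 ^ n + r) ^ 2 ^ n = -1 := by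
      rw [e_two_pow_add hr, mul_pow, e_two_pow_pow_two_pow, e_pow_two_pow_of_lt hr, mul_one]
    rw [norm_w_two_pow_add hr.le, hquot, hpow, ih, sigma1_two_pow_add hr, pow_succ']
    norm_num

lemma norm_w_le {z : ℂ} (hz : ‖z‖ = 1) (k : ℕ) : ‖w k z‖ ≤ 2 ^ sigma1 k := by
  induction k using Nat.two_pow_add_induction generalizing z with
  | zero => simp [w, sigma1]
  | two_pow_add n r hr ih =>
    have hroots : ‖z ^ 2 ^ n - 1‖ ≤ 2 := by
      calc ‖z ^ 2 ^ n - 1‖ ≤ ‖z ^ 2 ^ n‖ + ‖(1 : ℂ)‖ := norm_sub_le _ _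
        _ = 2 := by rw [norm_pow, hz]; norm_num
    have hrot : ‖z / e (2 ^ n)‖ = 1 := by rw [norm_div, hz, norm_e_two_pow, div_one]
    rw [norm_w_two_pow_add hr.le, sigma1_two_pow_add hr, pow_succ']
    exact mul_le_mul hroots (ih hrot) (norm_nonneg _) zero_le_two

theorem abs_w_at_ek_general (k : ℕ) :
    ‖∏ j ∈ Finset.range k, (e k - e j)‖ = 2 ^ sigma1 k ∧
      ∀ z : ℂ, ‖z‖ = 1 →
        ‖∏ j ∈ Finset.range k, (z - e j)‖ ≤ 2 ^ sigma1 k :=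
  ⟨norm_w_e_self k, fun _ hz => norm_w_le hz k⟩

theorem abs_w_at_ek (k : ℕ) (hk : 1 ≤ k) :
    ‖∏ j ∈ Finset.range k, (e k - e j)‖ = 2 ^ sigma1 k ∧
      ∀ z : ℂ, ‖z‖ = 1 →
        ‖∏ j ∈ Finset.range k, (z - e j)‖ ≤ 2 ^ sigma1 k :=
  abs_w_at_ek_general k
end

section
/- Let Z = (z_j)_{j≥0} be a Leja sequence on a compact set X ⊂ ℂ, i.e., for each k ≥ 1, |Π_{j<k}(z_k − z_j)| = max_{z∈X} |Π_{j<k}(z − z_j)|. Let λ_{Z_k,2}(z) := (Σ_{j=0}^{k−1} |l_{j,k}(z)|²)^{1/2} be the quadratic Lebesgue function of the first k points, where l_{j,k} are the Lagrange basis polynomials. Then for all k ≥ 1 and z ∈ X: λ_{Z_{k+1},2}(z) ≤ λ_{Z_k,2}(z) + λ_{Z_k,2}(z_k) + 1. -/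
/-- Lagrange basis polynomial of index `j` for the nodes `z 0, …, z (k-1)`. -/
noncomputable def lag (z : ℕ → ℂ) (j k : ℕ) (x : ℂ) : ℂ :=
  ∏ i ∈ (Finset.range k).erase j, (x - z i) / (z j - z i)

/-- Quadratic Lebesgue function of the first `k` nodes. -/
noncomputable def leb2 (z : ℕ → ℂ) (k : ℕ) (x : ℂ) : ℝ :=
  Real.sqrt (∑ j ∈ Finset.range k, ‖lag z j k x‖ ^ 2)

/-! Adding the node `z k` to `z 0, …, z (k-1)` changes each old basis polynomial by a multiple of
the new one: `l_{j,k+1} = l_{j,k} - l_{j,k}(z_k) l_{k,k+1}`, both sides being polynomials of degree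
`≤ k` that agree at the `k + 1` nodes. By Minkowski's inequality in `ℂ^k`, the quadratic Lebesgue
function then grows by at most `|l_{k,k+1}(x)| (λ_k(z_k) + 1)`, and the Leja property says exactly
that `|l_{k,k+1}| ≤ 1` on `X`. -/

theorem Real.sqrt_add_sq_le {a t : ℝ} (ha : 0 ≤ a) (ht : 0 ≤ t) : √(a + t ^ 2) ≤ √a + t := by
  rw [Real.sqrt_le_iff]
  refine ⟨by positivity, ?_⟩
  nlinarith [Real.sq_sqrt ha, Real.sqrt_nonneg a]

theorem Finset.sqrt_sum_norm_add_sq_le {ι E : Type*} [SeminormedAddCommGroup E] (s : Finset ι)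
    (f g : ι → E) :
    √(∑ i ∈ s, ‖f i + g i‖ ^ 2) ≤ √(∑ i ∈ s, ‖f i‖ ^ 2) + √(∑ i ∈ s, ‖g i‖ ^ 2) := by
  have hnorm : ∀ h : ι → E, ‖WithLp.toLp 2 (fun i : s => h i)‖ = √(∑ i ∈ s, ‖h i‖ ^ 2) :=
    fun h => by rw [PiLp.norm_eq_of_L2, ← Finset.sum_coe_sort s]
  rw [← hnorm, ← hnorm, ← hnorm]
  exact norm_add_le (WithLp.toLp 2 (fun i : s => f i)) (WithLp.toLp 2 (fun i : s => g i))

theorem Finset.range_add_one_erase_self (k : ℕ) :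
    (Finset.range (k + 1)).erase k = Finset.range k := by
  rw [Finset.range_add_one, Finset.erase_insert Finset.notMem_range_self]

section Lagrange

variable {z : ℕ → ℂ} {j k : ℕ} (x : ℂ)

theorem lag_last (z : ℕ → ℂ) (k : ℕ) :
    lag z k (k + 1) x = (∏ i ∈ Finset.range k, (x - z i)) / ∏ i ∈ Finset.range k, (z k - z i) := by
  rw [lag, Finset.range_add_one_erase_self, Finset.prod_div_distrib]

theorem lag_succ_of_lt (hj : j < k) :
    lag z j (k + 1) x = (x - z k) / (z j - z k) * lag z j k x := by
  have hk : k ∉ (Finset.range k).erase j := fun h =>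
    Finset.notMem_range_self (Finset.mem_of_mem_erase h)
  rw [lag, Finset.range_add_one, Finset.erase_insert_of_ne hj.ne', Finset.prod_insert hk, lag]

theorem lag_eval_mul_lag_last (hz : Function.Injective z) (hj : j < k) :
    lag z j k (z k) * lag z k (k + 1) x = (x - z j) / (z k - z j) * lag z j k x := by
  have hlast : lag z k (k + 1) x =
      (x - z j) / (z k - z j) * ∏ i ∈ (Finset.range k).erase j, (x - z i) / (z k - z i) := by
    rw [lag, Finset.range_add_one_erase_self]
    exact (Finset.mul_prod_erase _ (fun i => (x - z i) / (z k - z i))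
      (Finset.mem_range.mpr hj)).symm
  rw [hlast, lag, lag, mul_left_comm, ← Finset.prod_mul_distrib]
  congr 1
  refine Finset.prod_congr rfl fun i hi => ?_
  have hik : z k - z i ≠ 0 := sub_ne_zero.mpr <| hz.ne <|
    (Finset.mem_range.mp (Finset.mem_of_mem_erase hi)).ne'
  have hij : z j - z i ≠ 0 := sub_ne_zero.mpr <| hz.ne (Finset.ne_of_mem_erase hi).symm
  field_simp

theorem lag_succ_eq_sub (hz : Function.Injective z) (hj : j < k) :
    lag z j (k + 1) x = lag z j k x - lag z j k (z k) * lag z k (k + 1) x := by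
  rw [lag_succ_of_lt x hj, lag_eval_mul_lag_last x hz hj]
  have hjk : z j - z k ≠ 0 := sub_ne_zero.mpr (hz.ne hj.ne)
  have hkj : z k - z j ≠ 0 := sub_ne_zero.mpr (hz.ne hj.ne')
  field_simp
  ring

theorem leb2_succ_le (hz : Function.Injective z) (k : ℕ) :
    leb2 z (k + 1) x ≤ leb2 z k x + ‖lag z k (k + 1) x‖ * (leb2 z k (z k) + 1) := by
  set c := lag z k (k + 1) x
  have hold : √(∑ j ∈ Finset.range k, ‖lag z j (k + 1) x‖ ^ 2) ≤
      leb2 z k x + ‖c‖ * leb2 z k (z k) := by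
    have hsplit : ∀ j ∈ Finset.range k,
        lag z j (k + 1) x = lag z j k x + -(c * lag z j k (z k)) := fun j hj => by
      rw [lag_succ_eq_sub x hz (Finset.mem_range.mp hj), mul_comm, sub_eq_add_neg]
    have hscale : √(∑ j ∈ Finset.range k, ‖-(c * lag z j k (z k))‖ ^ 2) =
        ‖c‖ * leb2 z k (z k) := by
      simp only [norm_neg, norm_mul, mul_pow, ← Finset.mul_sum, leb2]
      rw [Real.sqrt_mul (sq_nonneg _), Real.sqrt_sq (norm_nonneg c)]
    rw [Finset.sum_congr rfl fun j hj => by rw [hsplit j hj], ← hscale]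
    exact Finset.sqrt_sum_norm_add_sq_le _ _ _
  calc leb2 z (k + 1) x
      = √(∑ j ∈ Finset.range k, ‖lag z j (k + 1) x‖ ^ 2 + ‖c‖ ^ 2) := by
        rw [leb2, Finset.sum_range_succ]
    _ ≤ √(∑ j ∈ Finset.range k, ‖lag z j (k + 1) x‖ ^ 2) + ‖c‖ :=
        Real.sqrt_add_sq_le (by positivity) (norm_nonneg c)
    _ ≤ leb2 z k x + ‖c‖ * (leb2 z k (z k) + 1) := by linarith

end Lagrange

theorem quadratic_lebesgue_step_general (X : Set ℂ) (z : ℕ → ℂ)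
    (hdist : Function.Injective z)
    (hLeja : ∀ k : ℕ, 1 ≤ k → ∀ x ∈ X,
      ‖∏ j ∈ Finset.range k, (x - z j)‖ ≤
        ‖∏ j ∈ Finset.range k, (z k - z j)‖) :
    ∀ k : ℕ, 1 ≤ k → ∀ x ∈ X,
      leb2 z (k + 1) x ≤ leb2 z k x + leb2 z k (z k) + 1 := by
  intro k hk x hx
  have hlast : ‖lag z k (k + 1) x‖ ≤ 1 := by
    rw [lag_last, norm_div]
    exact div_le_one_of_le₀ (hLeja k hk x hx) (norm_nonneg _)
  have hleb : 0 ≤ leb2 z k (z k) := Real.sqrt_nonneg _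
  calc leb2 z (k + 1) x ≤ leb2 z k x + ‖lag z k (k + 1) x‖ * (leb2 z k (z k) + 1) :=
        leb2_succ_le x hdist k
    _ ≤ leb2 z k x + leb2 z k (z k) + 1 := by nlinarith

theorem quadratic_lebesgue_step (X : Set ℂ) (hX : IsCompact X) (z : ℕ → ℂ)
    (hmem : ∀ j, z j ∈ X) (hdist : Function.Injective z)
    (hLeja : ∀ k : ℕ, 1 ≤ k → ∀ x ∈ X,
      ‖∏ j ∈ Finset.range k, (x - z j)‖ ≤
        ‖∏ j ∈ Finset.range k, (z k - z j)‖) :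
    ∀ k : ℕ, 1 ≤ k → ∀ x ∈ X,
      leb2 z (k + 1) x ≤ leb2 z k x + leb2 z k (z k) + 1 :=
  quadratic_lebesgue_step_general X z hdist hLeja
end

section
/- For the bit-reversal sequence e_k = exp(iπ Σ_j a_j 2^{−j}), the quadratic Lebesgue function at the next node satisfies λ_{E_k,2}(e_k) = √(2^{σ₁(k)} − 1) for all k ≥ 1, where σ₁(k) is the number of ones in the binary expansion of k. -/
/-
Since `e (2m+1) = -e (2m)` and `e (2m) ^ 2 = e m`, the first `2m` nodes are the square roots of the
first `m` nodes, in antipodal pairs `±e (2i)`. Hence the Lagrange basis polynomials for `2m` nodes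
factor through `x ↦ x²`:
  `ℓ_{2i}(x) = (x + e_{2i}) / (2 e_{2i}) · ℓ_i(x²)`,  `ℓ_{2i+1}(x) = (e_{2i} - x) / (2 e_{2i}) · ℓ_i(x²)`.
On the unit circle the parallelogram law makes the two prefactors contribute `1` in total, so
`λ_{2m}(e_{2m})² = λ_m(e_m)²`. At `e_{2m+1} = -e_{2m}` the extra node multiplies each basis
polynomial by a factor that cancels its prefactor up to a unimodular constant, and the new basis
polynomial equals `1`, so `λ_{2m+1}(e_{2m+1})² = 2 λ_m(e_m)² + 1`. The binary digit count satisfies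
the matching recursion `σ₁(2m) = σ₁(m)`, `σ₁(2m+1) = σ₁(m) + 1`.
-/

open Finset Function

noncomputable def bitReversal (k : ℕ) : ℂ :=
  ∑ j ∈ range (k + 1), if k.testBit j then ((1 : ℂ) / 2) ^ j else 0

lemma bitReversal_eq_sum_range {k n : ℕ} (hk : k < 2 ^ n) :
    bitReversal k = ∑ j ∈ range n, if k.testBit j then ((1 : ℂ) / 2) ^ j else 0 := by
  have hvanish : ∀ j, k < 2 ^ j → (if k.testBit j then ((1 : ℂ) / 2) ^ j else 0) = 0 :=
    fun j hj => by rw [Nat.testBit_eq_false_of_lt hj]; rfl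
  rcases le_total (k + 1) n with h | h
  · refine sum_subset (range_subset_range.2 h) fun j hj hj' => hvanish j ?_
    simp only [mem_range, not_lt] at hj'
    exact Nat.lt_two_pow_self.trans_le (Nat.pow_le_pow_right two_pos (by omega))
  · refine (sum_subset (range_subset_range.2 h) fun j _ hj' => hvanish j ?_).symm
    simp only [mem_range, not_lt] at hj'
    exact hk.trans_le (Nat.pow_le_pow_right two_pos hj')

lemma bitReversal_bit (b : Bool) (m : ℕ) :
    bitReversal (Nat.bit b m) = b.toNat + bitReversal m / 2 := by
  have hm : m < 2 ^ Nat.bit b m :=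
    Nat.lt_two_pow_self.trans_le (Nat.pow_le_pow_right two_pos (by rw [Nat.bit_val]; omega))
  rw [bitReversal, sum_range_succ', bitReversal_eq_sum_range hm, sum_div]
  simp only [Nat.testBit_bit_succ, Nat.testBit_bit_zero]
  rw [add_comm]
  congr 1
  · cases b <;> simp
  · refine sum_congr rfl fun j _ => ?_
    split_ifs <;> ring

lemma bitReversal_two_mul (m : ℕ) : bitReversal (2 * m) = bitReversal m / 2 := by
  simpa [Nat.bit_val] using bitReversal_bit false m

lemma bitReversal_two_mul_add_one (m : ℕ) : bitReversal (2 * m + 1) = 1 + bitReversal m / 2 := by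
  simpa [Nat.bit_val] using bitReversal_bit true m

lemma e_eq_exp_bitReversal (k : ℕ) : e k = Complex.exp (Real.pi * Complex.I * bitReversal k) := rfl

lemma e_two_mul_add_one (m : ℕ) : e (2 * m + 1) = -e (2 * m) := by
  rw [e_eq_exp_bitReversal, e_eq_exp_bitReversal, bitReversal_two_mul_add_one, bitReversal_two_mul,
    mul_add, mul_one, Complex.exp_add, Complex.exp_pi_mul_I, neg_one_mul]

lemma e_two_mul_sq (m : ℕ) : e (2 * m) ^ 2 = e m := by
  rw [e_eq_exp_bitReversal, e_eq_exp_bitReversal, bitReversal_two_mul, ← Complex.exp_nat_mul]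
  congr 1
  push_cast
  ring

lemma e_sq (k : ℕ) : e k ^ 2 = e (k / 2) := by
  obtain ⟨m, rfl | rfl⟩ := k.even_or_odd'
  · rw [e_two_mul_sq, Nat.mul_div_cancel_left m two_pos]
  · rw [e_two_mul_add_one, neg_sq, e_two_mul_sq]
    congr 1
    omega

lemma norm_e (k : ℕ) : ‖e k‖ = 1 := by
  rw [e_eq_exp_bitReversal, Complex.norm_exp]
  simp [bitReversal, Complex.im_sum, apply_ite, ← Complex.ofReal_ofNat, ← Complex.ofReal_pow]

lemma e_ne_zero (k : ℕ) : e k ≠ 0 := Complex.exp_ne_zero _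

lemma e_injective : Injective e := by
  intro a b h
  induction hn : a + b using Nat.strong_induction_on generalizing a b with
  | _ n ih =>
  obtain rfl | hpos := Nat.eq_zero_or_pos n
  · omega
  have hhalf : a / 2 = b / 2 := ih _ (by omega) (by rw [← e_sq, ← e_sq, h]) rfl
  have hparity : ∀ s, e (2 * s + 1) ≠ e (2 * s) := fun s hs => e_ne_zero (2 * s) <| by
    rw [e_two_mul_add_one] at hs
    linear_combination -hs / 2
  obtain ⟨s, rfl | rfl⟩ := a.even_or_odd' <;> obtain ⟨t, rfl | rfl⟩ := b.even_or_odd'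
  · omega
  · obtain rfl : s = t := by omega
    exact absurd h.symm (hparity s)
  · obtain rfl : s = t := by omega
    exact absurd h (hparity s)
  · omega

def doubling (S : Finset ℕ) : Finset ℕ := S.biUnion fun s => {2 * s, 2 * s + 1}

lemma mem_doubling {S : Finset ℕ} {t : ℕ} : t ∈ doubling S ↔ t / 2 ∈ S := by
  simp only [doubling, mem_biUnion, mem_insert, mem_singleton]
  exact ⟨fun ⟨s, hs, ht⟩ => by obtain rfl | rfl := ht <;> simpa [Nat.mul_add_div] using hs,
    fun h => ⟨t / 2, h, by omega⟩⟩

@[to_additive]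
lemma prod_doubling {M : Type*} [CommMonoid M] (S : Finset ℕ) (g : ℕ → M) :
    ∏ t ∈ doubling S, g t = ∏ s ∈ S, g (2 * s) * g (2 * s + 1) := by
  rw [doubling, prod_biUnion]
  · exact prod_congr rfl fun s _ => prod_pair (by omega)
  · intro s _ s' _ hss'
    simp only [disjoint_left, mem_insert, mem_singleton]
    omega

lemma doubling_range (m : ℕ) : doubling (range m) = range (2 * m) := by
  ext t
  simp only [mem_doubling, mem_range]
  omega

lemma doubling_erase (S : Finset ℕ) (i : ℕ) :
    doubling (S.erase i) = ((doubling S).erase (2 * i)).erase (2 * i + 1) := by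
  ext t
  simp only [mem_doubling, mem_erase]
  exact ⟨fun ⟨hi, hS⟩ => ⟨by omega, by omega, hS⟩, fun ⟨_, _, hS⟩ => ⟨by omega, hS⟩⟩

lemma lag_self {z : ℕ → ℂ} (hz : Injective z) (j k : ℕ) : lag z j k (z j) = 1 :=
  prod_eq_one fun _ hi => div_self (sub_ne_zero.2 (hz.ne (ne_of_mem_erase hi).symm))

lemma lag_succ (z : ℕ → ℂ) {j n : ℕ} (hj : j ≠ n) (x : ℂ) :
    lag z j (n + 1) x = (x - z n) / (z j - z n) * lag z j n x := by
  rw [lag, lag, range_add_one, erase_insert_of_ne (Ne.symm hj), prod_insert (by simp)]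

structure IsAntipodalSqrt (z w : ℕ → ℂ) : Prop where
  odd : ∀ s, z (2 * s + 1) = -z (2 * s)
  sq : ∀ s, z (2 * s) ^ 2 = w s

section AntipodalSqrt

variable {z w : ℕ → ℂ}

lemma prod_doubling_sub_div_sub (h : IsAntipodalSqrt z w) (S : Finset ℕ) (x c : ℂ) :
    ∏ t ∈ doubling S, (x - z t) / (c - z t) = ∏ s ∈ S, (x ^ 2 - w s) / (c ^ 2 - w s) := by
  rw [prod_doubling]
  refine prod_congr rfl fun s _ => ?_
  rw [h.odd, ← h.sq, div_mul_div_comm]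
  congr 1 <;> ring

lemma lag_two_mul_two_mul (h : IsAntipodalSqrt z w) {i m : ℕ} (hi : i < m) (x : ℂ) :
    lag z (2 * i) (2 * m) x = (x + z (2 * i)) / (2 * z (2 * i)) * lag w i m (x ^ 2) := by
  have hmem : 2 * i + 1 ∈ (range (2 * m)).erase (2 * i) := by
    simp only [mem_erase, mem_range]; omega
  rw [lag, ← mul_prod_erase _ _ hmem, ← doubling_range, ← doubling_erase,
    prod_doubling_sub_div_sub h, h.sq, h.odd, lag]
  congr 1
  ring

lemma lag_two_mul_add_one_two_mul (h : IsAntipodalSqrt z w) {i m : ℕ} (hi : i < m) (x : ℂ) :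
    lag z (2 * i + 1) (2 * m) x = (z (2 * i) - x) / (2 * z (2 * i)) * lag w i m (x ^ 2) := by
  have hmem : 2 * i ∈ (range (2 * m)).erase (2 * i + 1) := by
    simp only [mem_erase, mem_range]; omega
  rw [lag, ← mul_prod_erase _ _ hmem, erase_right_comm, ← doubling_range, ← doubling_erase,
    prod_doubling_sub_div_sub h, h.odd, neg_sq, h.sq, lag]
  congr 1
  rw [← neg_div_neg_eq]
  ring

lemma lag_two_mul_two_mul_add_one (h : IsAntipodalSqrt z w) (m : ℕ) (x : ℂ) :
    lag z (2 * m) (2 * m + 1) x = lag w m (m + 1) (x ^ 2) := by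
  have hset : (range (2 * m + 1)).erase (2 * m) = doubling ((range (m + 1)).erase m) := by
    ext t
    simp only [mem_doubling, mem_erase, mem_range]
    omega
  rw [lag, hset, prod_doubling_sub_div_sub h, h.sq, lag]

lemma sum_norm_lag_two_mul_sq (h : IsAntipodalSqrt z w) (hnorm : ∀ t, ‖z t‖ = 1) {x : ℂ}
    (hx : ‖x‖ = 1) (m : ℕ) :
    ∑ j ∈ range (2 * m), ‖lag z j (2 * m) x‖ ^ 2 = ∑ i ∈ range m, ‖lag w i m (x ^ 2)‖ ^ 2 := by
  rw [← doubling_range, sum_doubling]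
  refine sum_congr rfl fun i hi => ?_
  have hi : i < m := mem_range.1 hi
  set a := z (2 * i)
  have hpair : ‖(x + a) / (2 * a)‖ ^ 2 + ‖(a - x) / (2 * a)‖ ^ 2 = 1 := by
    have hpar := parallelogram_law_with_norm ℂ x a
    rw [hx, hnorm, norm_sub_rev] at hpar
    rw [norm_div, norm_div, norm_mul, hnorm, Complex.norm_ofNat, div_pow, div_pow, ← add_div, hpar]
    norm_num
  rw [lag_two_mul_two_mul h hi, lag_two_mul_add_one_two_mul h hi, norm_mul, norm_mul, mul_pow,
    mul_pow, ← add_mul, hpair, one_mul]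

lemma norm_lag_two_mul_add_one (h : IsAntipodalSqrt z w) (hnorm : ∀ t, ‖z t‖ = 1)
    (hw : Injective w) {j m : ℕ} (hj : j < 2 * m) :
    ‖lag z j (2 * m + 1) (z (2 * m + 1))‖ = ‖lag w (j / 2) m (w m)‖ := by
  have hsq : ∀ t, z t ^ 2 = w (t / 2) := fun t => by
    obtain ⟨s, rfl | rfl⟩ := t.even_or_odd'
    · rw [h.sq, Nat.mul_div_cancel_left s two_pos]
    · rw [h.odd, neg_sq, h.sq]; congr 1; omega
  have hne : z j ^ 2 ≠ z (2 * m) ^ 2 := by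
    rw [hsq, hsq]; exact hw.ne (by omega)
  have hz0 : ∀ t, z t ≠ 0 := fun t ht => by simpa [ht] using hnorm t
  rw [lag_succ z (by omega), h.odd]
  obtain ⟨i, rfl | rfl⟩ := j.even_or_odd'
  · have hdiff : z (2 * i) - z (2 * m) ≠ 0 := sub_ne_zero.2 fun h' => hne (by rw [h'])
    have hprefactor : (-z (2 * m) - z (2 * m)) / (z (2 * i) - z (2 * m)) *
        ((-z (2 * m) + z (2 * i)) / (2 * z (2 * i))) = -(z (2 * m) / z (2 * i)) := by
      field_simp [hz0]
      ring
    rw [lag_two_mul_two_mul h (by omega), neg_sq, h.sq, ← mul_assoc, hprefactor, norm_mul,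
      norm_neg, norm_div, hnorm, hnorm, div_one, one_mul, Nat.mul_div_cancel_left i two_pos]
  · have hsum : -z (2 * i) - z (2 * m) ≠ 0 := fun h' =>
      hne (by rw [h.odd, show z (2 * m) = -z (2 * i) by linear_combination -h'])
    have hprefactor : (-z (2 * m) - z (2 * m)) / (-z (2 * i) - z (2 * m)) *
        ((z (2 * i) - -z (2 * m)) / (2 * z (2 * i))) = z (2 * m) / z (2 * i) := by
      field_simp [hz0]
      ring
    rw [lag_two_mul_add_one_two_mul h (by omega), neg_sq, h.sq, h.odd, ← mul_assoc, hprefactor,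
      norm_mul, norm_div, hnorm, hnorm, div_one, one_mul]
    congr 2
    omega

lemma sum_norm_lag_two_mul_add_one_sq (h : IsAntipodalSqrt z w) (hnorm : ∀ t, ‖z t‖ = 1)
    (hw : Injective w) (m : ℕ) :
    ∑ j ∈ range (2 * m + 1), ‖lag z j (2 * m + 1) (z (2 * m + 1))‖ ^ 2
      = 2 * ∑ i ∈ range m, ‖lag w i m (w m)‖ ^ 2 + 1 := by
  have hnew : lag z (2 * m) (2 * m + 1) (z (2 * m + 1)) = 1 := by
    rw [lag_two_mul_two_mul_add_one h, h.odd, neg_sq, h.sq, lag_self hw]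
  rw [sum_range_succ, hnew, norm_one, one_pow, ← doubling_range, sum_doubling, mul_sum]
  congr 1
  refine sum_congr rfl fun i hi => ?_
  have hi : i < m := mem_range.1 hi
  rw [norm_lag_two_mul_add_one h hnorm hw (by omega),
    norm_lag_two_mul_add_one h hnorm hw (by omega), Nat.mul_div_cancel_left i two_pos,
    show (2 * i + 1) / 2 = i by omega, two_mul]

end AntipodalSqrt

lemma isAntipodalSqrt_e : IsAntipodalSqrt e e := ⟨e_two_mul_add_one, e_two_mul_sq⟩

lemma sigma1_two_mul (m : ℕ) : sigma1 (2 * m) = sigma1 m := by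
  rcases Nat.eq_zero_or_pos m with rfl | hm
  · rfl
  · simpa [sigma1] using
      congrArg (List.count 1) (Nat.digits_add 2 one_lt_two 0 m two_pos (Or.inr hm.ne'))

lemma sigma1_two_mul_add_one (m : ℕ) : sigma1 (2 * m + 1) = sigma1 m + 1 := by
  simpa [sigma1, add_comm] using
    congrArg (List.count 1) (Nat.digits_add 2 one_lt_two 1 m one_lt_two (Or.inl one_ne_zero))

lemma sum_norm_lag_e_sq (k : ℕ) :
    ∑ j ∈ range k, ‖lag e j k (e k)‖ ^ 2 = 2 ^ sigma1 k - 1 := by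
  induction k using Nat.evenOddRec with
  | h0 => simp [sigma1]
  | h_even m ih =>
    rw [sum_norm_lag_two_mul_sq isAntipodalSqrt_e norm_e (norm_e _), e_two_mul_sq, ih,
      sigma1_two_mul]
  | h_odd m ih =>
    rw [sum_norm_lag_two_mul_add_one_sq isAntipodalSqrt_e norm_e e_injective, ih,
      sigma1_two_mul_add_one, pow_succ]
    ring

theorem leb2_at_ek_general (k : ℕ) :
    leb2 e k (e k) = Real.sqrt (2 ^ sigma1 k - 1) := by
  rw [leb2, sum_norm_lag_e_sq]

theorem leb2_at_ek (k : ℕ) (hk : 1 ≤ k) :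
    leb2 e k (e k) = Real.sqrt (2 ^ sigma1 k - 1) :=
  leb2_at_ek_general k
end

section
/- Let R = (r_j)_{j≥0} be the real sequence defined by r_0 = 1, r_1 = −1, r_2 = 0, and for j ≥ 2: r_{2j−1} = √((r_j + 1)/2), r_{2j} = −r_{2j−1}. Then all r_j lie in [−1, 1], the r_j are pairwise distinct, and 2r_{2j}² − 1 = 2r_{2j−1}² − 1 = r_j for all j ≥ 2. -/
theorem RLeja_properties (r : ℕ → ℝ) (h0 : r 0 = 1) (h1 : r 1 = -1) (h2 : r 2 = 0)
    (hodd : ∀ j : ℕ, 2 ≤ j → r (2 * j - 1) = Real.sqrt ((r j + 1) / 2))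
    (heven : ∀ j : ℕ, 2 ≤ j → r (2 * j) = - r (2 * j - 1)) :
    (∀ j : ℕ, r j ∈ Set.Icc (-1 : ℝ) 1) ∧ Function.Injective r ∧
      ∀ j : ℕ, 2 ≤ j →
        2 * r (2 * j) ^ 2 - 1 = r j ∧ 2 * r (2 * j - 1) ^ 2 - 1 = r j := by
  -- strict bounds for j ≥ 2
  have key : ∀ j : ℕ, 2 ≤ j → -1 < r j ∧ r j < 1 := by
    intro j
    induction j using Nat.strong_induction_on with
    | _ j ih =>
      intro hj
      rcases Nat.lt_or_ge j 3 with h3 | h3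
      · have : j = 2 := by omega
        rw [this, h2]; constructor <;> norm_num
      · rcases Nat.even_or_odd j with ⟨k, hk⟩ | ⟨k, hk⟩
        · -- j = 2k
          have hk2 : 2 ≤ k := by omega
          have hb := ih k (by omega) hk2
          have hje : j = 2 * k := by omega
          rw [hje, heven k hk2, hodd k hk2]
          have hnn : (0:ℝ) ≤ (r k + 1) / 2 := by linarith [hb.1]
          have hlt : Real.sqrt ((r k + 1) / 2) < 1 := by
            calc Real.sqrt ((r k + 1) / 2) < Real.sqrt 1 :=
                  Real.sqrt_lt_sqrt hnn (by linarith [hb.2])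
              _ = 1 := Real.sqrt_one
          constructor
          · linarith
          · have := Real.sqrt_nonneg ((r k + 1) / 2); linarith
        · -- j = 2k+1 = 2(k+1) - 1
          have hk1 : 1 ≤ k := by omega
          set m := k + 1 with hm
          have hm2 : 2 ≤ m := by omega
          have hb := ih m (by omega) hm2
          have hje : j = 2 * m - 1 := by omega
          rw [hje, hodd m hm2]
          have hnn : (0:ℝ) ≤ (r m + 1) / 2 := by linarith [hb.1]
          constructor
          · have := Real.sqrt_nonneg ((r m + 1) / 2); linarith
          · calc Real.sqrt ((r m + 1) / 2) < Real.sqrt 1 :=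
                  Real.sqrt_lt_sqrt hnn (by linarith [hb.2])
              _ = 1 := Real.sqrt_one
  have pos : ∀ k : ℕ, 2 ≤ k → 0 < r (2 * k - 1) := by
    intro k hk
    rw [hodd k hk]
    exact Real.sqrt_pos.mpr (by linarith [(key k hk).1])
  have neg : ∀ k : ℕ, 2 ≤ k → r (2 * k) < 0 := by
    intro k hk
    rw [heven k hk]; linarith [pos k hk]
  -- Chebyshev relation
  have chev : ∀ j : ℕ, 2 ≤ j →
      2 * r (2 * j) ^ 2 - 1 = r j ∧ 2 * r (2 * j - 1) ^ 2 - 1 = r j := by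
    intro j hj
    have hnn : (0:ℝ) ≤ (r j + 1) / 2 := by linarith [(key j hj).1]
    have hsq : r (2 * j - 1) ^ 2 = (r j + 1) / 2 := by
      rw [hodd j hj, Real.sq_sqrt hnn]
    have hsq2 : r (2 * j) ^ 2 = (r j + 1) / 2 := by
      rw [heven j hj, neg_pow, hsq]; ring
    constructor <;> [rw [hsq2]; rw [hsq]] <;> ring
  -- injectivity
  have inj : ∀ b a : ℕ, a < b → r a ≠ r b := by
    intro b
    induction b using Nat.strong_induction_on with
    | _ b ih =>
      intro a hab heq
      rcases Nat.lt_or_ge a 2 with ha2 | ha2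
      · interval_cases a
        · -- a = 0, r b = 1
          rw [h0] at heq
          rcases Nat.lt_or_ge b 2 with hb2 | hb2
          · have : b = 1 := by omega
            rw [this, h1] at heq; norm_num at heq
          · linarith [(key b hb2).2, heq.symm.le]
        · -- a = 1, r b = -1
          rw [h1] at heq
          have hb2 : 2 ≤ b := by omega
          linarith [(key b hb2).1, heq.symm.le]
      · have hb3 : 3 ≤ b := by omega
        -- sign of r b
        rcases Nat.even_or_odd b with ⟨k, hk⟩ | ⟨k, hk⟩
        · -- b = 2k, r b < 0
          have hk2 : 2 ≤ k := by omega
          have hbe : b = 2 * k := by omega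
          have hbneg : r b < 0 := hbe ▸ neg k hk2
          rcases Nat.lt_or_ge a 3 with ha3 | ha3
          · have : a = 2 := by omega
            rw [this, h2] at heq; linarith
          · rcases Nat.even_or_odd a with ⟨l, hl⟩ | ⟨l, hl⟩
            · -- a = 2l, both even
              have hl2 : 2 ≤ l := by omega
              have hae : a = 2 * l := by omega
              have e1 := (chev l hl2).1
              have e2 := (chev k hk2).1
              rw [← hae] at e1; rw [← hbe] at e2
              have : r l = r k := by rw [← e1, ← e2, heq]
              exact ih k (by omega) l (by omega) this
            · -- a = 2l+1 odd, r a > 0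
              have hm2 : 2 ≤ l + 1 := by omega
              have hae : a = 2 * (l + 1) - 1 := by omega
              have : 0 < r a := hae ▸ pos (l + 1) hm2
              linarith
        · -- b = 2k+1 odd, r b > 0
          have hm2 : 2 ≤ k + 1 := by omega
          have hbe : b = 2 * (k + 1) - 1 := by omega
          have hbpos : 0 < r b := hbe ▸ pos (k + 1) hm2
          rcases Nat.lt_or_ge a 3 with ha3 | ha3
          · have : a = 2 := by omega
            rw [this, h2] at heq; linarith
          · rcases Nat.even_or_odd a with ⟨l, hl⟩ | ⟨l, hl⟩
            · -- a even, r a < 0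
              have hl2 : 2 ≤ l := by omega
              have hae : a = 2 * l := by omega
              have : r a < 0 := hae ▸ neg l hl2
              linarith
            · -- both odd
              have hl2 : 2 ≤ l + 1 := by omega
              have hae : a = 2 * (l + 1) - 1 := by omega
              have e1 := (chev (l + 1) hl2).2
              have e2 := (chev (k + 1) hm2).2
              rw [← hae] at e1; rw [← hbe] at e2
              have : r (l + 1) = r (k + 1) := by rw [← e1, ← e2, heq]
              exact ih (k + 1) (by omega) (l + 1) (by omega) this
  refine ⟨?_, ?_, chev⟩
  · intro j
    rcases Nat.lt_or_ge j 2 with hj | hj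
    · interval_cases j
      · rw [h0]; constructor <;> norm_num
      · rw [h1]; constructor <;> norm_num
    · exact ⟨(key j hj).1.le, (key j hj).2.le⟩
  · intro a b heq
    by_contra hne
    rcases Nat.lt_or_gt_of_ne hne with h | h
    · exact inj b a h heq
    · exact inj a b h heq.symm
end
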